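/- (Lemma 'Large Deviations', expectation part: exponential averaging is unbiased.) For every integer h ≥ 1, every edge-weight assignment with τ_v > 0 for all nonempty v, and every pair of distinct binary strings a, b of the same length m with 1 ≤ m ≤ h: ∑_{x : V → Φ} P(x) S_a(x) S_b(x) = e^{−τ(a,b)}. Equivalently, the exponential average e^{−τ̄(a,b)} = 2^{−2(h−m)} ∑_{a'∈A} ∑_{b'∈B} Θ_{a,a'}^{−1} Θ_{b,b'}^{−1} e^{−τ̂(a',b')} satisfies E[e^{−τ̄(a,b)}] = e^{−τ(a,b)}. -/

import Mathlib

open scoped BigOperators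

/-- The matrix exponential of a real `Φ × Φ` matrix. -/
noncomputable def matExp {Φ : Type*} [Fintype Φ] [DecidableEq Φ] (A : Matrix Φ Φ ℝ) :
    Matrix Φ Φ ℝ := NormedSpace.exp A

/-- Sum of edge weights along the ancestor path of `v` (heap indexing of the binary
tree: vertices are positive integers, the root is `1`, and the parent of `v ≥ 2` is
`v / 2`), stopping at (and excluding) the ancestor `a`.  This is `τ(a, v)`. -/
noncomputable def pathSum (τ : ℕ → ℝ) (a : ℕ) (v : ℕ) : ℝ :=
  if _h : v ≤ a then 0 else τ v + pathSum τ a (v / 2)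
termination_by v
decreasing_by omega

/-- Lowest common ancestor (longest common prefix) of two same-level vertices in heap
indexing. -/
def lca (a b : ℕ) : ℕ :=
  if a = b then a else lca (a / 2) (b / 2)
termination_by a + b
decreasing_by omega

/-- Tree distance `τ(a,b) = τ(c,a) + τ(c,b)` where `c` is the longest common prefix of
the same-level vertices `a` and `b`. -/
noncomputable def treeDist (τ : ℕ → ℝ) (a b : ℕ) : ℝ :=
  pathSum τ (lca a b) a + pathSum τ (lca a b) b

/-- Interpret a heap-index vertex `v ∈ {1, …, 2^{h+1} − 1}` of the complete binary tree
of depth `h` as an index into configurations (binary strings of length `m ≤ h`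
correspond to the integers in `[2^m, 2^{m+1})`). -/
def idx (h v : ℕ) : Fin (2 ^ (h + 1) - 1) :=
  ⟨(v - 1) % (2 ^ (h + 1) - 1), Nat.mod_lt _ (by
    have : 2 ^ 1 ≤ 2 ^ (h + 1) := Nat.pow_le_pow_right (by norm_num) (by omega)
    omega)⟩

/-- The GTR law on the complete binary tree of depth `h`: the probability
`P(x) = π(x_ρ) ∏_{v nonempty} (exp(τ_v Q))_{x_{parent(v)}, x_v}` of a configuration
`x` (configurations assign a state to each of the `2^{h+1} − 1` vertices). -/
noncomputable def gtrP {Φ : Type*} [Fintype Φ] [DecidableEq Φ]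
    (h : ℕ) (π : Φ → ℝ) (Q : Matrix Φ Φ ℝ) (τ : ℕ → ℝ)
    (x : Fin (2 ^ (h + 1) - 1) → Φ) : ℝ :=
  π (x (idx h 1)) *
    ∏ v ∈ Finset.Ico 2 (2 ^ (h + 1)),
      (matExp (τ v • Q)) (x (idx h (v / 2))) (x (idx h v))

/-- The estimator `S(x) = ∑_{ℓ leaf} Ψ(ℓ) ν_{x_ℓ} / Θ_{ρ,ℓ}` with `Θ_{ρ,ℓ} = e^{−τ(ρ,ℓ)}`. -/
noncomputable def estS {Φ : Type*} [Fintype Φ] [DecidableEq Φ]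
    (h : ℕ) (ν : Φ → ℝ) (τ Ψ : ℕ → ℝ) (x : Fin (2 ^ (h + 1) - 1) → Φ) : ℝ :=
  ∑ ℓ ∈ Finset.Ico (2 ^ h) (2 ^ (h + 1)),
    Ψ ℓ * ν (x (idx h ℓ)) * Real.exp (pathSum τ 1 ℓ)

/-- `K_Ψ = ∑_{v nonempty} (1 − e^{−2τ_v}) e^{2τ(ρ,v)} Ψ(v)²`. -/
noncomputable def Kflow (h : ℕ) (τ Ψ : ℕ → ℝ) : ℝ :=
  ∑ v ∈ Finset.Ico 2 (2 ^ (h + 1)),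
    (1 - Real.exp (-(2 * τ v))) * Real.exp (2 * pathSum τ 1 v) * Ψ v ^ 2

/-- `Ψ` is a unit flow from the root to the leaves of the depth-`h` tree: nonnegative,
`Ψ(ρ) = 1`, and `Ψ(v) = Ψ(v0) + Ψ(v1)` for internal vertices. -/
def IsUnitFlow (h : ℕ) (Ψ : ℕ → ℝ) : Prop :=
  Ψ 1 = 1 ∧ (∀ v, 1 ≤ v → v < 2 ^ (h + 1) → 0 ≤ Ψ v) ∧
    ∀ v, 1 ≤ v → v < 2 ^ h → Ψ v = Ψ (2 * v) + Ψ (2 * v + 1)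

/-- `S_a`, the implicit ancestral-state estimator at the vertex `a` on level `m`
(heap indexing: the leaves below `a` are the integers in `[a·2^{h−m}, (a+1)·2^{h−m})`):
`S_a(x) = 2^{−(h−m)} ∑_{a′ ∈ A} ν_{x_{a′}} / Θ_{a,a′}` with `Θ_{a,a′} = e^{−τ(a,a′)}`. -/
noncomputable def estSAt {Φ : Type*} [Fintype Φ] [DecidableEq Φ]
    (h m : ℕ) (ν : Φ → ℝ) (τ : ℕ → ℝ) (a : ℕ) (x : Fin (2 ^ (h + 1) - 1) → Φ) : ℝ :=
  ∑ a' ∈ Finset.Ico (a * 2 ^ (h - m)) ((a + 1) * 2 ^ (h - m)),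
    ((2 : ℝ) ^ (h - m))⁻¹ * ν (x (idx h a')) * Real.exp (pathSum τ a a')

/-!
Since `ν` is an eigenvector of every `exp(t Q)` with eigenvalue `e^{-t}`, summing out a leaf `ℓ`
replaces `ν(x_ℓ)` by `e^{-τ_ℓ} ν(x_{parent ℓ})`, and since `π` is stationary the marginal law of
every vertex is `π`. Peeling the tree level by level from the leaves therefore gives
`E[ν(x_p) ν(x_q)] = e^{-τ(p,q)}` for any two vertices `p, q` of one level, the case `p = q` being
the normalisation `∑ π ν² = 1`. For leaves `a'` below `a` and `b'` below `b`,
`τ(a',b') = τ(a,a') + τ(b,b') + τ(a,b)`, so every one of the `4^{h-m}` terms of `S_a S_b`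
contributes exactly `4^{-(h-m)} e^{-τ(a,b)}`.
-/

open Finset Matrix Function

section TreeIndexing

theorem pathSum_of_le (τ : ℕ → ℝ) {a v : ℕ} (h : v ≤ a) : pathSum τ a v = 0 := by
  rw [pathSum, dif_pos h]

theorem pathSum_of_lt (τ : ℕ → ℝ) {a v : ℕ} (h : a < v) :
    pathSum τ a v = τ v + pathSum τ a (v / 2) := by
  rw [pathSum, dif_neg (not_le.2 h)]

theorem lca_self (a : ℕ) : lca a a = a := by
  rw [lca, if_pos rfl]

theorem lca_of_ne {a b : ℕ} (h : a ≠ b) : lca a b = lca (a / 2) (b / 2) := by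
  rw [lca, if_neg h]

theorem lca_le (a b : ℕ) : lca a b ≤ a ∧ lca a b ≤ b := by
  induction a, b using lca.induct with
  | case1 a => simp [lca_self]
  | case2 a b hne ih => rw [lca_of_ne hne]; omega

theorem treeDist_self (τ : ℕ → ℝ) (a : ℕ) : treeDist τ a a = 0 := by
  simp [treeDist, lca_self, pathSum_of_le]

theorem treeDist_of_ne (τ : ℕ → ℝ) {p q : ℕ} (hp : 1 ≤ p) (hq : 1 ≤ q) (hpq : p ≠ q) :
    treeDist τ p q = τ p + τ q + treeDist τ (p / 2) (q / 2) := by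
  have hle := lca_le (p / 2) (q / 2)
  rw [treeDist, treeDist, lca_of_ne hpq, pathSum_of_lt τ (by omega : lca (p / 2) (q / 2) < p),
    pathSum_of_lt τ (by omega : lca (p / 2) (q / 2) < q)]
  ring

theorem treeDist_of_div_pow (τ : ℕ → ℝ) {a b a' b' k : ℕ} (ha : 1 ≤ a) (hb : 1 ≤ b)
    (hab : a ≠ b) (ha' : a' / 2 ^ k = a) (hb' : b' / 2 ^ k = b) :
    treeDist τ a' b' = pathSum τ a a' + pathSum τ b b' + treeDist τ a b := by
  induction k generalizing a' b' with
  | zero =>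
    simp only [pow_zero, Nat.div_one] at ha' hb'
    simp [ha', hb', pathSum_of_le]
  | succ k ih =>
    rw [pow_succ', ← Nat.div_div_eq_div_mul] at ha' hb'
    have ha'' : a < a' := by
      have := Nat.div_le_self (a' / 2) (2 ^ k); omega
    have hb'' : b < b' := by
      have := Nat.div_le_self (b' / 2) (2 ^ k); omega
    have hne : a' ≠ b' := fun he => hab (by rw [← ha', ← hb', he])
    rw [treeDist_of_ne τ (by omega) (by omega) hne, ih ha' hb', pathSum_of_lt τ ha'',
      pathSum_of_lt τ hb'']
    ring

theorem idx_val {h v : ℕ} (hv : 1 ≤ v) (hvh : v < 2 ^ (h + 1)) : (idx h v : ℕ) = v - 1 :=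
  Nat.mod_eq_of_lt (by omega)

theorem update_idx_of_ne {Φ : Type*} {h v w : ℕ} (x : Fin (2 ^ (h + 1) - 1) → Φ) (j : Φ)
    (hv : 1 ≤ v) (hvh : v < 2 ^ (h + 1)) (hw : 1 ≤ w) (hwh : w < 2 ^ (h + 1)) (hwv : w ≠ v) :
    update x (idx h v) j (idx h w) = x (idx h w) := by
  refine update_of_ne (fun he => hwv ?_) _ _
  have := congrArg Fin.val he
  rw [idx_val hw hwh, idx_val hv hvh] at this
  omega

theorem prod_Ico_one_idx {Φ : Type*} {h : ℕ} (φ : Φ → ℝ) (x : Fin (2 ^ (h + 1) - 1) → Φ) :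
    ∏ v ∈ Ico 1 (2 ^ (h + 1)), φ (x (idx h v)) = ∏ i, φ (x i) := by
  refine prod_nbij' (idx h) (fun i => i.val + 1) (by simp) (fun i _ => ?_) (fun v hv => ?_)
    (fun i _ => ?_) (fun _ _ => rfl)
  · rw [mem_Ico]; omega
  · rw [mem_Ico] at hv; rw [idx_val hv.1 hv.2]; omega
  · ext; rw [idx_val (by omega) (by omega)]; rfl

end TreeIndexing

section CoordinateSums

variable {ι Φ : Type*} [Fintype ι] [DecidableEq ι] [Fintype Φ]

theorem sum_apply_self_eq_sum_sum (k : ι) (j₀ : Φ) {F : (ι → Φ) → Φ → ℝ}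
    (hF : ∀ x j, F (update x k j) = F x) :
    ∑ x, F x (x k) =
      ∑ y : {i // i ≠ k} → Φ, ∑ j, F ((Equiv.funSplitAt k Φ).symm (j₀, y)) j := by
  have hsplit : ∀ j y, (Equiv.funSplitAt k Φ).symm (j, y) =
      update ((Equiv.funSplitAt k Φ).symm (j₀, y)) k j := by
    intro j y
    funext i
    by_cases hi : i = k
    · subst hi; simp
    · simp [hi]
  rw [← (Equiv.funSplitAt k Φ).symm.sum_comp, Fintype.sum_prod_type, sum_comm]
  refine Fintype.sum_congr _ _ fun y => Fintype.sum_congr _ _ fun j => ?_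
  rw [hsplit, hF, update_self]

theorem sum_apply_self_eq_of_forall_sum_eq (k : ι) {F G : (ι → Φ) → Φ → ℝ}
    (hF : ∀ x j, F (update x k j) = F x) (hG : ∀ x j, G (update x k j) = G x)
    (hFG : ∀ x, ∑ j, F x j = ∑ j, G x j) :
    ∑ x, F x (x k) = ∑ x, G x (x k) := by
  rcases isEmpty_or_nonempty Φ with hΦ | ⟨⟨j₀⟩⟩
  · have : IsEmpty (ι → Φ) := ⟨fun x => hΦ.false (x k)⟩
    simp
  · rw [sum_apply_self_eq_sum_sum k j₀ hF, sum_apply_self_eq_sum_sum k j₀ hG]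
    exact Fintype.sum_congr _ _ fun y => hFG _

theorem sum_prod_apply_mul_apply {π : Φ → ℝ} (hπ : ∑ j, π j = 1) (f : Φ → ℝ) (k : ι) :
    ∑ x : ι → Φ, (∏ i, π (x i)) * f (x k) = π ⬝ᵥ f := by
  have hprod : ∀ x : ι → Φ, (∏ i, π (x i)) * f (x k) =
      ∏ i, π (x i) * if i = k then f (x i) else 1 := fun x => by
    rw [prod_mul_distrib, prod_ite_eq' univ k, if_pos (mem_univ k)]
  simp only [hprod]
  rw [← Fintype.prod_sum (fun i j => π j * if i = k then f j else 1), prod_eq_single k]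
  · simp [dotProduct]
  · intro i _ hik
    simp [hik, hπ]
  · simp

end CoordinateSums

section MatrixExponential

variable {Φ : Type*} [Fintype Φ] {Q : Matrix Φ Φ ℝ}

theorem vecMul_eq_zero_of_reversible {π : Φ → ℝ} (hQrow : ∀ i, ∑ j, Q i j = 0)
    (hrev : ∀ i j, π i * Q i j = π j * Q j i) : π ᵥ* Q = 0 := by
  funext j
  simp only [vecMul, dotProduct, hrev _ j, ← mul_sum, hQrow, mul_zero, Pi.zero_apply]

variable [DecidableEq Φ]

theorem matExp_mulVec_of_mulVec_eq_smul {A : Matrix Φ Φ ℝ} {v : Φ → ℝ} {c : ℝ}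
    (hv : A *ᵥ v = c • v) : matExp A *ᵥ v = Real.exp c • v := by
  let _ : NormedRing (Matrix Φ Φ ℝ) := Matrix.linftyOpNormedRing
  let _ : NormedAlgebra ℝ (Matrix Φ Φ ℝ) := Matrix.linftyOpNormedAlgebra
  have hpow : ∀ n : ℕ, A ^ n *ᵥ v = c ^ n • v := by
    intro n
    induction n with
    | zero => simp
    | succ n ih => rw [pow_succ', ← mulVec_mulVec, ih, mulVec_smul, hv, smul_smul, pow_succ]
  have hmat := (NormedSpace.exp_series_hasSum_exp' (𝕂 := ℝ) A).map
    (mulVec.addMonoidHomLeft v) (continuous_id.matrix_mulVec continuous_const)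
  have hscal := (NormedSpace.exp_series_hasSum_exp' (𝕂 := ℝ) c).smul_const v
  rw [← Real.exp_eq_exp_ℝ] at hscal
  refine hmat.unique ?_
  convert hscal using 1
  funext n
  change ((n.factorial : ℝ)⁻¹ • A ^ n) *ᵥ v = _
  rw [smul_mulVec, hpow, smul_smul, smul_eq_mul]

theorem vecMul_matExp_of_vecMul_eq_zero {A : Matrix Φ Φ ℝ} {w : Φ → ℝ} (hw : w ᵥ* A = 0) :
    w ᵥ* matExp A = w := by
  have hwT : Aᵀ *ᵥ w = (0 : ℝ) • w := by rw [mulVec_transpose, hw, zero_smul]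
  rw [← mulVec_transpose, matExp, ← Matrix.exp_transpose, ← matExp,
    matExp_mulVec_of_mulVec_eq_smul hwT, Real.exp_zero, one_smul]

theorem matExp_smul_mulVec_one (hQrow : ∀ i, ∑ j, Q i j = 0) (t : ℝ) :
    matExp (t • Q) *ᵥ 1 = 1 := by
  have h : (t • Q) *ᵥ 1 = (0 : ℝ) • 1 := by
    ext i
    simp [mulVec, dotProduct, ← mul_sum, hQrow]
  rw [matExp_mulVec_of_mulVec_eq_smul h, Real.exp_zero, one_smul]

theorem sum_matExp_smul_apply (hQrow : ∀ i, ∑ j, Q i j = 0) (t : ℝ) (i : Φ) :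
    ∑ j, matExp (t • Q) i j = 1 := by
  simpa [mulVec, dotProduct] using congrFun (matExp_smul_mulVec_one hQrow t) i

theorem matExp_smul_mulVec_of_mulVec_eq_neg {ν : Φ → ℝ} (hν : Q *ᵥ ν = -ν) (t : ℝ) :
    matExp (t • Q) *ᵥ ν = Real.exp (-t) • ν :=
  matExp_mulVec_of_mulVec_eq_smul (by rw [smul_mulVec, hν, smul_neg, neg_smul])

theorem vecMul_matExp_smul_of_reversible {π : Φ → ℝ} (hQrow : ∀ i, ∑ j, Q i j = 0)
    (hrev : ∀ i j, π i * Q i j = π j * Q j i) (t : ℝ) : π ᵥ* matExp (t • Q) = π :=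
  vecMul_matExp_of_vecMul_eq_zero (by
    rw [vecMul_smul, vecMul_eq_zero_of_reversible hQrow hrev, smul_zero])

end MatrixExponential

section TruncatedLaw

variable {Φ : Type*} [Fintype Φ] [DecidableEq Φ] {h : ℕ} {π : Φ → ℝ} {Q : Matrix Φ Φ ℝ}
  {τ : ℕ → ℝ}

variable (h π Q τ) in
/-- The GTR law restricted to the vertices `< n`, the other vertices being drawn independently
from `π`; this padding keeps the total mass `1`, so truncating the tree needs no renormalisation. -/
noncomputable def gtrTrunc (n : ℕ) (x : Fin (2 ^ (h + 1) - 1) → Φ) : ℝ :=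
  π (x (idx h 1)) * (∏ v ∈ Ico 2 n, matExp (τ v • Q) (x (idx h (v / 2))) (x (idx h v))) *
    ∏ v ∈ Ico n (2 ^ (h + 1)), π (x (idx h v))

theorem gtrP_eq_gtrTrunc : gtrP h π Q τ = gtrTrunc h π Q τ (2 ^ (h + 1)) := by
  funext x
  simp [gtrP, gtrTrunc]

theorem gtrTrunc_two (x : Fin (2 ^ (h + 1) - 1) → Φ) :
    gtrTrunc h π Q τ 2 x = ∏ i, π (x i) := by
  have h2 : 1 < 2 ^ (h + 1) := Nat.one_lt_two_pow (by omega)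
  rw [gtrTrunc, Ico_self, prod_empty, mul_one, ← prod_Ico_one_idx,
    prod_eq_prod_Ico_succ_bot h2]

theorem sum_gtrTrunc_mul_mul_apply_leaf (hQrow : ∀ i, ∑ j, Q i j = 0) {n ℓ : ℕ} (hℓ : 2 ≤ ℓ)
    (hℓn : ℓ < n) (hnℓ : n ≤ 2 * ℓ) (hn : n ≤ 2 ^ (h + 1)) {F : (Fin (2 ^ (h + 1) - 1) → Φ) → ℝ}
    (hF : ∀ x j, F (update x (idx h ℓ) j) = F x) (g : Φ → ℝ) :
    ∑ x, gtrTrunc h π Q τ n x * F x * g (x (idx h ℓ)) =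
      ∑ x, gtrTrunc h π Q τ n x * F x * (matExp (τ ℓ • Q) *ᵥ g) (x (idx h (ℓ / 2))) := by
  set M := matExp (τ ℓ • Q)
  set R : (Fin (2 ^ (h + 1) - 1) → Φ) → ℝ := fun x =>
    π (x (idx h 1)) * (∏ v ∈ (Ico 2 n).erase ℓ,
      matExp (τ v • Q) (x (idx h (v / 2))) (x (idx h v))) *
        ∏ v ∈ Ico n (2 ^ (h + 1)), π (x (idx h v))
  have hsplit : ∀ x, gtrTrunc h π Q τ n x = R x * M (x (idx h (ℓ / 2))) (x (idx h ℓ)) := by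
    intro x
    rw [gtrTrunc, ← mul_prod_erase _ _ (mem_Ico.2 ⟨hℓ, hℓn⟩)]
    ring
  -- `ℓ` is a leaf of the tree spanned by the vertices below `n`
  have hR : ∀ x j, R (update x (idx h ℓ) j) = R x := by
    intro x j
    simp only [R]
    congr 1
    · congr 1
      · rw [update_idx_of_ne x j (by omega) (by omega) le_rfl (by omega) (by omega)]
      · refine prod_congr rfl fun v hv => ?_
        rw [mem_erase, mem_Ico] at hv
        rw [update_idx_of_ne x j (by omega) (by omega) (by omega) (by omega) (by omega),
          update_idx_of_ne x j (by omega) (by omega) (by omega) (by omega) hv.1]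
    · refine prod_congr rfl fun v hv => ?_
      rw [mem_Ico] at hv
      rw [update_idx_of_ne x j (by omega) (by omega) (by omega) hv.2 (by omega)]
  have hpar : ∀ (x : Fin (2 ^ (h + 1) - 1) → Φ) (j : Φ),
      update x (idx h ℓ) j (idx h (ℓ / 2)) = x (idx h (ℓ / 2)) := fun x j =>
    update_idx_of_ne x j (by omega) (by omega) (by omega) (by omega) (by omega)
  simp only [hsplit]
  refine sum_apply_self_eq_of_forall_sum_eq (idx h ℓ)
    (F := fun x j => R x * M (x (idx h (ℓ / 2))) j * F x * g j)
    (G := fun x j => R x * M (x (idx h (ℓ / 2))) j * F x * (M *ᵥ g) (x (idx h (ℓ / 2))))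
    (fun x j => by simp only [hR, hpar, hF]) (fun x j => by simp only [hR, hpar, hF])
    (fun x => ?_)
  set i := x (idx h (ℓ / 2))
  calc ∑ j, R x * M i j * F x * g j = R x * F x * ∑ j, M i j * g j := by
        rw [mul_sum]; exact sum_congr rfl fun j _ => by ring
    _ = R x * F x * (M *ᵥ g) i * ∑ j, M i j := by
        rw [sum_matExp_smul_apply hQrow, mul_one]; rfl
    _ = ∑ j, R x * M i j * F x * (M *ᵥ g) i := by
        rw [mul_sum]; exact sum_congr rfl fun j _ => by ring

theorem sum_gtrTrunc_succ_mul (hQrow : ∀ i, ∑ j, Q i j = 0) (hπ : ∑ j, π j = 1) {n : ℕ}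
    (hn : 2 ≤ n) (hnh : n < 2 ^ (h + 1)) {F : (Fin (2 ^ (h + 1) - 1) → Φ) → ℝ}
    (hF : ∀ x j, F (update x (idx h n) j) = F x) :
    ∑ x, gtrTrunc h π Q τ (n + 1) x * F x = ∑ x, gtrTrunc h π Q τ n x * F x := by
  set M := matExp (τ n • Q)
  set R : (Fin (2 ^ (h + 1) - 1) → Φ) → ℝ := fun x =>
    π (x (idx h 1)) * (∏ v ∈ Ico 2 n, matExp (τ v • Q) (x (idx h (v / 2))) (x (idx h v))) *
      (∏ v ∈ Ico (n + 1) (2 ^ (h + 1)), π (x (idx h v))) * F x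
  have hsucc : ∀ x,
      gtrTrunc h π Q τ (n + 1) x * F x = R x * M (x (idx h (n / 2))) (x (idx h n)) := by
    intro x
    rw [gtrTrunc, prod_Ico_succ_top hn]
    ring
  have hself : ∀ x, gtrTrunc h π Q τ n x * F x = R x * π (x (idx h n)) := by
    intro x
    rw [gtrTrunc, prod_eq_prod_Ico_succ_bot hnh]
    ring
  have hR : ∀ x j, R (update x (idx h n) j) = R x := by
    intro x j
    simp only [R, hF]
    congr 2
    · congr 1
      · rw [update_idx_of_ne x j (by omega) hnh le_rfl (by omega) (by omega)]
      · refine prod_congr rfl fun v hv => ?_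
        rw [mem_Ico] at hv
        rw [update_idx_of_ne x j (by omega) hnh (by omega) (by omega) (by omega),
          update_idx_of_ne x j (by omega) hnh (by omega) (by omega) (by omega)]
    · refine prod_congr rfl fun v hv => ?_
      rw [mem_Ico] at hv
      rw [update_idx_of_ne x j (by omega) hnh (by omega) hv.2 (by omega)]
  have hpar : ∀ (x : Fin (2 ^ (h + 1) - 1) → Φ) (j : Φ),
      update x (idx h n) j (idx h (n / 2)) = x (idx h (n / 2)) := fun x j =>
    update_idx_of_ne x j (by omega) hnh (by omega) (by omega) (by omega)
  simp only [hsucc, hself]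
  refine sum_apply_self_eq_of_forall_sum_eq (idx h n)
    (F := fun x j => R x * M (x (idx h (n / 2))) j) (G := fun x j => R x * π j)
    (fun x j => by simp only [hR, hpar]) (fun x j => by simp only [hR]) (fun x => ?_)
  rw [← mul_sum, ← mul_sum, sum_matExp_smul_apply hQrow, hπ]

theorem sum_gtrTrunc_mul_of_le (hQrow : ∀ i, ∑ j, Q i j = 0) (hπ : ∑ j, π j = 1) {m n : ℕ}
    (hm : 2 ≤ m) (hmn : m ≤ n) (hnh : n ≤ 2 ^ (h + 1)) {F : (Fin (2 ^ (h + 1) - 1) → Φ) → ℝ}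
    (hF : ∀ v, m ≤ v → v < n → ∀ x j, F (update x (idx h v) j) = F x) :
    ∑ x, gtrTrunc h π Q τ n x * F x = ∑ x, gtrTrunc h π Q τ m x * F x := by
  induction n, hmn using Nat.le_induction with
  | base => rfl
  | succ n hmn ih =>
    rw [sum_gtrTrunc_succ_mul hQrow hπ (by omega) (by omega) (hF n hmn (by omega)),
      ih (by omega) fun v hmv hvn => hF v hmv (by omega)]

theorem sum_gtrTrunc_level_mul_apply (hQrow : ∀ i, ∑ j, Q i j = 0)
    (hrev : ∀ i j, π i * Q i j = π j * Q j i) (hπ : ∑ j, π j = 1) {d : ℕ} (hd : d ≤ h) {p : ℕ}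
    (hp : 2 ^ d ≤ p) (hpd : p < 2 ^ (d + 1)) (f : Φ → ℝ) :
    ∑ x, gtrTrunc h π Q τ (2 ^ (d + 1)) x * f (x (idx h p)) = π ⬝ᵥ f := by
  induction d generalizing p f with
  | zero =>
    obtain rfl : p = 1 := by simp at hp hpd; omega
    simp only [zero_add, pow_one, gtrTrunc_two]
    exact sum_prod_apply_mul_apply hπ f _
  | succ d ih =>
    have h₁ := pow_succ 2 d
    have h₂ : 2 ^ (d + 2) = 2 ^ (d + 1) * 2 := pow_succ 2 (d + 1)
    have h₃ : 2 ^ (d + 2) ≤ 2 ^ (h + 1) := Nat.pow_le_pow_right two_pos (by omega)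
    have h₄ := Nat.one_le_two_pow (n := d)
    have hpull := sum_gtrTrunc_mul_mul_apply_leaf (π := π) (τ := τ) hQrow (by omega) hpd
      (by omega) h₃ (F := fun _ => 1) (fun _ _ => rfl) f
    simp only [mul_one] at hpull
    rw [hpull, sum_gtrTrunc_mul_of_le hQrow hπ (m := 2 ^ (d + 1)) (by omega) (by omega) h₃
      (fun v hv hv' x j => by rw [update_idx_of_ne x j (by omega) (by omega) (by omega) (by omega)
        (by omega)]),
      ih (by omega) (by omega) (by omega), dotProduct_mulVec,
      vecMul_matExp_smul_of_reversible hQrow hrev]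

theorem sum_gtrTrunc_mul_mul_eigen_leaf (hQrow : ∀ i, ∑ j, Q i j = 0) {ν : Φ → ℝ}
    (hν : Q *ᵥ ν = -ν) {d ℓ r : ℕ} (hdh : d + 1 ≤ h) (hℓ : 2 ^ (d + 1) ≤ ℓ)
    (hℓd : ℓ < 2 ^ (d + 2)) (hr : 1 ≤ r) (hrh : r < 2 ^ (h + 1)) (hrℓ : r ≠ ℓ) :
    ∑ x, gtrTrunc h π Q τ (2 ^ (d + 2)) x * ν (x (idx h r)) * ν (x (idx h ℓ)) =
      Real.exp (-τ ℓ) *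
        ∑ x, gtrTrunc h π Q τ (2 ^ (d + 2)) x * ν (x (idx h r)) * ν (x (idx h (ℓ / 2))) := by
  have h₁ := pow_succ 2 d
  have h₂ : 2 ^ (d + 2) = 2 ^ (d + 1) * 2 := pow_succ 2 (d + 1)
  have h₃ : 2 ^ (d + 2) ≤ 2 ^ (h + 1) := Nat.pow_le_pow_right two_pos (by omega)
  rw [sum_gtrTrunc_mul_mul_apply_leaf hQrow (by omega) hℓd (by omega) h₃
    (F := fun x => ν (x (idx h r))) (fun x j => by
      rw [update_idx_of_ne x j (by omega) (by omega) hr hrh hrℓ]),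
    matExp_smul_mulVec_of_mulVec_eq_neg hν, mul_sum]
  exact sum_congr rfl fun x _ => by simp only [Pi.smul_apply, smul_eq_mul]; ring

theorem sum_gtrTrunc_level_mul_mul (hQrow : ∀ i, ∑ j, Q i j = 0)
    (hrev : ∀ i j, π i * Q i j = π j * Q j i) (hπ : ∑ j, π j = 1) {ν : Φ → ℝ}
    (hν : Q *ᵥ ν = -ν) (hnorm : ∑ i, π i * ν i ^ 2 = 1) {d : ℕ} (hd : d ≤ h) {p q : ℕ}
    (hp : 2 ^ d ≤ p) (hpd : p < 2 ^ (d + 1)) (hq : 2 ^ d ≤ q) (hqd : q < 2 ^ (d + 1)) :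
    ∑ x, gtrTrunc h π Q τ (2 ^ (d + 1)) x * (ν (x (idx h p)) * ν (x (idx h q))) =
      Real.exp (-treeDist τ p q) := by
  have hdiag : ∀ {d p : ℕ}, d ≤ h → 2 ^ d ≤ p → p < 2 ^ (d + 1) →
      ∑ x, gtrTrunc h π Q τ (2 ^ (d + 1)) x * (ν (x (idx h p)) * ν (x (idx h p))) =
        Real.exp (-treeDist τ p p) := fun hd hp hpd => by
    rw [treeDist_self, neg_zero, Real.exp_zero,
      sum_gtrTrunc_level_mul_apply hQrow hrev hπ hd hp hpd (fun i => ν i * ν i), ← hnorm]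
    simp only [dotProduct, sq]
  induction d generalizing p q with
  | zero =>
    obtain rfl : p = q := by omega
    exact hdiag hd hp hpd
  | succ d ih =>
    rcases eq_or_ne p q with rfl | hpq
    · exact hdiag hd hp hpd
    have h₁ := pow_succ 2 d
    have h₂ : 2 ^ (d + 2) = 2 ^ (d + 1) * 2 := pow_succ 2 (d + 1)
    have h₃ : 2 ^ (d + 2) ≤ 2 ^ (h + 1) := Nat.pow_le_pow_right two_pos (by omega)
    have h₄ := Nat.one_le_two_pow (n := d)
    set T := gtrTrunc h π Q τ (2 ^ (d + 2))
    calc ∑ x, T x * (ν (x (idx h p)) * ν (x (idx h q)))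
        = ∑ x, T x * ν (x (idx h q)) * ν (x (idx h p)) := sum_congr rfl fun x _ => by ring
      _ = Real.exp (-τ p) * ∑ x, T x * ν (x (idx h (p / 2))) * ν (x (idx h q)) := by
          rw [sum_gtrTrunc_mul_mul_eigen_leaf hQrow hν hd hp hpd (by omega) (by omega)
            (Ne.symm hpq)]
          exact congrArg _ (sum_congr rfl fun x _ => by ring)
      _ = Real.exp (-τ p) * Real.exp (-τ q) *
            ∑ x, T x * (ν (x (idx h (p / 2))) * ν (x (idx h (q / 2)))) := by
          rw [sum_gtrTrunc_mul_mul_eigen_leaf hQrow hν hd hq hqd (by omega) (by omega)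
            (by omega), mul_assoc]
          exact congrArg _ (congrArg _ (sum_congr rfl fun x _ => by ring))
      _ = Real.exp (-τ p) * Real.exp (-τ q) * Real.exp (-treeDist τ (p / 2) (q / 2)) := by
          rw [sum_gtrTrunc_mul_of_le hQrow hπ (m := 2 ^ (d + 1)) (by omega) (by omega) h₃
            (fun v hv hv' x j => by
              rw [update_idx_of_ne x j (by omega) (by omega) (by omega) (by omega) (by omega),
                update_idx_of_ne x j (by omega) (by omega) (by omega) (by omega) (by omega)]),
            ih (by omega) (by omega) (by omega) (by omega) (by omega)]
      _ = Real.exp (-treeDist τ p q) := by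
          rw [treeDist_of_ne τ (by omega) (by omega) hpq, ← Real.exp_add, ← Real.exp_add]
          congr 1
          ring

end TruncatedLaw

theorem mem_Ico_two_pow_of_mem_Ico_mul {m h a a' : ℕ} (hmh : m ≤ h) (ha : 2 ^ m ≤ a)
    (ham : a < 2 ^ (m + 1)) (ha' : a' ∈ Ico (a * 2 ^ (h - m)) ((a + 1) * 2 ^ (h - m))) :
    2 ^ h ≤ a' ∧ a' < 2 ^ (h + 1) := by
  rw [mem_Ico] at ha'
  have hh : 2 ^ h = 2 ^ m * 2 ^ (h - m) := by rw [← pow_add, Nat.add_sub_cancel' hmh]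
  have hh' : 2 ^ (h + 1) = 2 ^ (m + 1) * 2 ^ (h - m) := by
    rw [← pow_add]; congr 1; omega
  constructor
  · rw [hh]; exact (Nat.mul_le_mul_right _ ha).trans ha'.1
  · rw [hh']; exact ha'.2.trans_le (Nat.mul_le_mul_right _ ham)

theorem sum_gtrP_mul_descendants {Φ : Type*} [Fintype Φ] [DecidableEq Φ] {Q : Matrix Φ Φ ℝ}
    {π ν : Φ → ℝ} (hQrow : ∀ i, ∑ j, Q i j = 0) (hrev : ∀ i j, π i * Q i j = π j * Q j i)
    (hπ : ∑ j, π j = 1) (hν : Q *ᵥ ν = -ν) (hnorm : ∑ i, π i * ν i ^ 2 = 1) (τ : ℕ → ℝ)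
    {h m a b a' b' : ℕ} (hmh : m ≤ h) (ha : 2 ^ m ≤ a) (ham : a < 2 ^ (m + 1)) (hb : 2 ^ m ≤ b)
    (hbm : b < 2 ^ (m + 1)) (hab : a ≠ b)
    (ha' : a' ∈ Ico (a * 2 ^ (h - m)) ((a + 1) * 2 ^ (h - m)))
    (hb' : b' ∈ Ico (b * 2 ^ (h - m)) ((b + 1) * 2 ^ (h - m))) :
    ∑ x, gtrP h π Q τ x * (ν (x (idx h a')) * ν (x (idx h b'))) =
      Real.exp (-(pathSum τ a a' + pathSum τ b b' + treeDist τ a b)) := by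
  obtain ⟨ha'₁, ha'₂⟩ := mem_Ico_two_pow_of_mem_Ico_mul hmh ha ham ha'
  obtain ⟨hb'₁, hb'₂⟩ := mem_Ico_two_pow_of_mem_Ico_mul hmh hb hbm hb'
  have hpos := Nat.one_le_two_pow (n := m)
  rw [mem_Ico] at ha' hb'
  rw [gtrP_eq_gtrTrunc, sum_gtrTrunc_level_mul_mul hQrow hrev hπ hν hnorm le_rfl ha'₁ ha'₂ hb'₁
    hb'₂, treeDist_of_div_pow τ (by omega) (by omega) hab (Nat.div_eq_of_lt_le ha'.1 ha'.2)
    (Nat.div_eq_of_lt_le hb'.1 hb'.2)]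

theorem sum_mul_estSAt_mul_estSAt {Φ : Type*} [Fintype Φ] [DecidableEq Φ] {h : ℕ}
    (P : (Fin (2 ^ (h + 1) - 1) → Φ) → ℝ) (m : ℕ) (ν : Φ → ℝ) (τ : ℕ → ℝ) (a b : ℕ) :
    ∑ x, P x * (estSAt h m ν τ a x * estSAt h m ν τ b x) =
      ∑ a' ∈ Ico (a * 2 ^ (h - m)) ((a + 1) * 2 ^ (h - m)),
        ∑ b' ∈ Ico (b * 2 ^ (h - m)) ((b + 1) * 2 ^ (h - m)),
          ((2 : ℝ) ^ (h - m))⁻¹ ^ 2 * (Real.exp (pathSum τ a a' + pathSum τ b b') *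
            ∑ x, P x * (ν (x (idx h a')) * ν (x (idx h b')))) := by
  simp only [estSAt, sum_mul_sum]
  simp only [mul_sum]
  rw [sum_comm]
  refine sum_congr rfl fun a' _ => ?_
  rw [sum_comm]
  refine sum_congr rfl fun b' _ => sum_congr rfl fun x _ => ?_
  rw [Real.exp_add]
  ring

theorem exponential_averaging_unbiased_general {Φ : Type*} [Fintype Φ] [DecidableEq Φ]
    (Q : Matrix Φ Φ ℝ) (π ν : Φ → ℝ)
    (hQrow : ∀ i, ∑ j : Φ, Q i j = 0)
    (hπsum : ∑ i : Φ, π i = 1)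
    (hrev : ∀ i j, π i * Q i j = π j * Q j i)
    (hν : Q.mulVec ν = -ν)
    (hnorm : ∑ i : Φ, π i * ν i ^ 2 = 1) :
    ∀ h : ℕ, 1 ≤ h →
    ∀ τ : ℕ → ℝ, (∀ v, 2 ≤ v → v < 2 ^ (h + 1) → 0 < τ v) →
    ∀ m : ℕ, 1 ≤ m → m ≤ h →
    ∀ a b : ℕ, 2 ^ m ≤ a → a < 2 ^ (m + 1) → 2 ^ m ≤ b → b < 2 ^ (m + 1) → a ≠ b →
      ∑ x : Fin (2 ^ (h + 1) - 1) → Φ,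
          gtrP h π Q τ x * (estSAt h m ν τ a x * estSAt h m ν τ b x) =
        Real.exp (-(treeDist τ a b)) := by
  intro h _ τ _ m _ hmh a b ha ham hb hbm hab
  have hcard : ∀ c, #(Ico (c * 2 ^ (h - m)) ((c + 1) * 2 ^ (h - m))) = 2 ^ (h - m) := fun c => by
    rw [Nat.card_Ico, add_one_mul, Nat.add_sub_cancel_left]
  rw [sum_mul_estSAt_mul_estSAt]
  calc _ = ∑ a' ∈ Ico (a * 2 ^ (h - m)) ((a + 1) * 2 ^ (h - m)),
          ∑ b' ∈ Ico (b * 2 ^ (h - m)) ((b + 1) * 2 ^ (h - m)),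
            ((2 : ℝ) ^ (h - m))⁻¹ ^ 2 * Real.exp (-treeDist τ a b) :=
        sum_congr rfl fun a' ha' => sum_congr rfl fun b' hb' => by
          rw [sum_gtrP_mul_descendants hQrow hrev hπsum hν hnorm τ hmh ha ham hb hbm hab ha' hb',
            ← Real.exp_add]
          congr 2
          ring
    _ = Real.exp (-treeDist τ a b) := by
        rw [sum_const, sum_const, hcard, hcard, nsmul_eq_mul, nsmul_eq_mul]
        push_cast
        field_simp

/-- (Large Deviations, expectation part: exponential averaging is unbiased.) For every
depth `h ≥ 1`, positive edge weights, and distinct same-level vertices `a, b` on level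
`m` with `1 ≤ m ≤ h`: `E[S_a S_b] = e^{−τ(a,b)}`. -/
theorem exponential_averaging_unbiased {Φ : Type*} [Fintype Φ] [DecidableEq Φ]
    (hcard : 2 ≤ Fintype.card Φ)
    (Q : Matrix Φ Φ ℝ) (π ν : Φ → ℝ)
    (hQoff : ∀ i j, i ≠ j → 0 < Q i j)
    (hQrow : ∀ i, ∑ j : Φ, Q i j = 0)
    (hπpos : ∀ i, 0 < π i)
    (hπsum : ∑ i : Φ, π i = 1)
    (hrev : ∀ i j, π i * Q i j = π j * Q j i)
    (hν : Q.mulVec ν = -ν)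
    (hnorm : ∑ i : Φ, π i * ν i ^ 2 = 1) :
    ∀ h : ℕ, 1 ≤ h →
    ∀ τ : ℕ → ℝ, (∀ v, 2 ≤ v → v < 2 ^ (h + 1) → 0 < τ v) →
    ∀ m : ℕ, 1 ≤ m → m ≤ h →
    ∀ a b : ℕ, 2 ^ m ≤ a → a < 2 ^ (m + 1) → 2 ^ m ≤ b → b < 2 ^ (m + 1) → a ≠ b →
      ∑ x : Fin (2 ^ (h + 1) - 1) → Φ,
          gtrP h π Q τ x * (estSAt h m ν τ a x * estSAt h m ν τ b x) =
        Real.exp (-(treeDist τ a b)) :=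
  exponential_averaging_unbiased_general Q π ν hQrow hπsum hrev hν hnorm
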